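/- arXiv:2004.10149 — 2 statements merged into one kernel-verified Lean document; each statement's English description precedes it below -/
import Mathlib

section
/- Let a₁ ∈ ℝ with a₁ ≠ 0, ε ∈ (0,1), T = 1+ε. If (y,x₀) and (ỹ,x̃₀) are two initial states in ℝ × L²(−1,0) with (y,x₀) ≠ (ỹ,x̃₀) (i.e. y ≠ ỹ or x₀ ≠ x̃₀ as elements of L²(−1,0)), then U_T(y,x₀) ∩ U_T(ỹ,x̃₀) = ∅. -/
open MeasureTheory Set

/-- The uncontrolled trajectory `x̃(t) = y + a₁ ∫₀ᵗ x₀(τ-1) dτ`. -/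
noncomputable def xtilde (a₁ y : ℝ) (x₀ : ℝ → ℝ) (t : ℝ) : ℝ :=
  y + a₁ * ∫ τ in (0:ℝ)..t, x₀ (τ - 1)

/-- The solution `x(t; y, x₀, u)` of `ẋ(t) = a₁ x(t-1) + u(t)`. -/
noncomputable def traj (a₁ y : ℝ) (x₀ u : ℝ → ℝ) (t : ℝ) : ℝ :=
  if t < 0 then x₀ t
  else if t ≤ 1 then xtilde a₁ y x₀ t + ∫ τ in (0:ℝ)..t, u τ
  else (xtilde a₁ y x₀ 1 + ∫ τ in (0:ℝ)..1, u τ)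
    + a₁ * ∫ s in (1:ℝ)..t, (xtilde a₁ y x₀ (s - 1) + ∫ τ in (0:ℝ)..(s - 1), u τ)
    + ∫ s in (1:ℝ)..t, u s

/-- The set `U_T(y,x₀)` of admissible controls at time `T = 1+ε`. -/
def admissibleSet (a₁ ε y : ℝ) (x₀ : ℝ → ℝ) : Set (ℝ → ℝ) :=
  {u | MemLp u 2 (volume.restrict (Set.Ioo (0:ℝ) (1 + ε))) ∧
    ∀ t ∈ Set.Icc ε (1 + ε), traj a₁ y x₀ u t = 0}

/-!
Let `u` be admissible from both states and let `D` be the difference of the two trajectories.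
On `[0, 1]`, `D` is the free trajectory `x̃` of the state `(y - ỹ, x₀ - x̃₀)`; on `[1, 1 + ε]` the
delay equation gives `D (1 + r) = D 1 + a₁ ∫₀ʳ D`. Since `D` vanishes on `[ε, 1 + ε]` and `a₁ ≠ 0`,
the primitive of the continuous function `D` vanishes on `[0, ε]`, so `D = 0` on all of `[0, 1]`.
Evaluating at `0` gives `y = ỹ`, and then the primitive of `x₀ - x̃₀` vanishes on `[-1, 0]`, so
`x₀ = x̃₀` almost everywhere by the Lebesgue differentiation theorem.
-/

open scoped ENNReal Topology
open Filter

section Primitive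

variable {E : Type*} [NormedAddCommGroup E] [NormedSpace ℝ E] [CompleteSpace E]

theorem ae_eq_zero_of_forall_intervalIntegral_eq_zero {f : ℝ → E} {a b : ℝ}
    (hf : IntervalIntegrable f volume a b) (h : ∀ x ∈ Icc a b, ∫ t in a..x, f t = 0) :
    f =ᵐ[volume.restrict (Ioo a b)] 0 := by
  rw [EventuallyEq, ae_restrict_iff' measurableSet_Ioo]
  filter_upwards [hf.ae_hasDerivAt_integral] with x hx hxab
  have hab : a ≤ b := (hxab.1.trans hxab.2).le
  have hconst : (fun x => ∫ t in a..x, f t) =ᶠ[𝓝 x] fun _ => 0 :=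
    eventually_of_mem (Ioo_mem_nhds hxab.1 hxab.2) fun z hz => h z (Ioo_subset_Icc_self hz)
  exact (hx (uIcc_of_le hab ▸ Ioo_subset_Icc_self hxab) a left_mem_uIcc).unique
    ((hasDerivAt_const x 0).congr_of_eventuallyEq hconst)

theorem eqOn_zero_of_forall_intervalIntegral_eq_zero {f : ℝ → E} {a b : ℝ} (hab : a < b)
    (hf : ContinuousOn f (Icc a b)) (h : ∀ x ∈ Icc a b, ∫ t in a..x, f t = 0) :
    EqOn f 0 (Icc a b) := by
  have hae := ae_eq_zero_of_forall_intervalIntegral_eq_zero (hf.intervalIntegrable_of_Icc hab.le) h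
  rw [Measure.restrict_congr_set Ioo_ae_eq_Icc] at hae
  exact Measure.eqOn_Icc_of_ae_eq volume hab.ne hae hf continuousOn_const

end Primitive

theorem MeasureTheory.MemLp.intervalIntegrable_of_Ioo {E : Type*} [NormedAddCommGroup E]
    {f : ℝ → E} {a b : ℝ} {p : ℝ≥0∞} (hp : 1 ≤ p) (hab : a ≤ b)
    (hf : MemLp f p (volume.restrict (Ioo a b))) :
    IntervalIntegrable f volume a b :=
  (intervalIntegrable_iff_integrableOn_Ioo_of_le hab).2 (hf.integrable hp)

section Trajectory

variable {a₁ y ytilde ε t : ℝ} {x₀ x₀tilde u : ℝ → ℝ}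

theorem continuousOn_xtilde (hx₀ : IntervalIntegrable (fun τ => x₀ (τ - 1)) volume 0 1) :
    ContinuousOn (xtilde a₁ y x₀) (Icc 0 1) := by
  have hprim := intervalIntegral.continuousOn_primitive_interval' hx₀ left_mem_uIcc
  rw [uIcc_of_le zero_le_one] at hprim
  exact continuousOn_const.add (continuousOn_const.mul hprim)

theorem traj_of_mem_Icc (ht : t ∈ Icc (0:ℝ) 1) :
    traj a₁ y x₀ u t = xtilde a₁ y x₀ t + ∫ τ in 0..t, u τ := by
  rw [traj, if_neg (not_lt.2 ht.1), if_pos ht.2]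

theorem continuousOn_traj (hx₀ : IntervalIntegrable (fun τ => x₀ (τ - 1)) volume 0 1)
    (hu : IntervalIntegrable u volume 0 1) :
    ContinuousOn (traj a₁ y x₀ u) (Icc 0 1) := by
  have hprim := intervalIntegral.continuousOn_primitive_interval' hu left_mem_uIcc
  rw [uIcc_of_le zero_le_one] at hprim
  exact ((continuousOn_xtilde hx₀).add hprim).congr fun t ht => traj_of_mem_Icc ht

theorem traj_sub_traj_of_mem_Icc (hx₀ : IntervalIntegrable (fun τ => x₀ (τ - 1)) volume 0 1)
    (hx₀tilde : IntervalIntegrable (fun τ => x₀tilde (τ - 1)) volume 0 1)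
    (ht : t ∈ Icc (0:ℝ) 1) :
    traj a₁ y x₀ u t - traj a₁ ytilde x₀tilde u t = xtilde a₁ (y - ytilde) (x₀ - x₀tilde) t := by
  have hsub : uIcc 0 t ⊆ uIcc 0 1 := by
    rw [uIcc_of_le ht.1, uIcc_of_le zero_le_one]
    exact Icc_subset_Icc_right ht.2
  rw [traj_of_mem_Icc ht, traj_of_mem_Icc ht]
  simp only [xtilde, Pi.sub_apply,
    intervalIntegral.integral_sub (hx₀.mono_set hsub) (hx₀tilde.mono_set hsub)]
  ring

-- As `traj` is written, the control term `∫ s in 1..t, u s` falls inside the delay integral.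
theorem traj_of_mem_Icc_one_two (ht : t ∈ Icc (1:ℝ) 2) :
    traj a₁ y x₀ u t =
      traj a₁ y x₀ u 1 + a₁ * ∫ s in 0..t - 1, (traj a₁ y x₀ u s + ∫ τ in 1..t, u τ) := by
  rcases ht.1.eq_or_lt with rfl | h1
  · simp
  have hshift := intervalIntegral.integral_comp_sub_right (a := 1) (b := t)
    (fun s => (xtilde a₁ y x₀ s + ∫ τ in 0..s, u τ) + ∫ τ in 1..t, u τ) 1
  rw [sub_self] at hshift
  rw [traj, if_neg (by linarith), if_neg h1.not_ge, traj_of_mem_Icc ⟨zero_le_one, le_rfl⟩, hshift]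
  congr 2
  refine intervalIntegral.integral_congr fun s hs => ?_
  rw [uIcc_of_le (by linarith)] at hs
  rw [traj_of_mem_Icc ⟨hs.1, by linarith [hs.2, ht.2]⟩]

theorem integral_traj_eq_of_forall_traj_eq_zero (ha₁ : a₁ ≠ 0) (hε : ε ≤ 1)
    (hz : ∀ t ∈ Icc ε (1 + ε), traj a₁ y x₀ u t = 0) {r : ℝ} (hr : r ∈ Icc 0 ε)
    (hint : IntervalIntegrable (traj a₁ y x₀ u) volume 0 r) :
    ∫ s in 0..r, traj a₁ y x₀ u s = -(r * ∫ s in 1..1 + r, u s) := by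
  have hstep := traj_of_mem_Icc_one_two (a₁ := a₁) (y := y) (x₀ := x₀) (u := u)
    (t := 1 + r) ⟨by linarith [hr.1], by linarith [hr.2]⟩
  rw [hz (1 + r) ⟨by linarith [hr.1, hr.2], by linarith [hr.2]⟩,
    hz 1 ⟨hε, by linarith [hr.1, hr.2]⟩, zero_add, add_sub_cancel_left,
    intervalIntegral.integral_add hint intervalIntegrable_const, intervalIntegral.integral_const,
    sub_zero, smul_eq_mul] at hstep
  linarith [(mul_eq_zero.1 hstep.symm).resolve_left ha₁]

theorem traj_sub_traj_eqOn_zero (ha₁ : a₁ ≠ 0) (hε : ε ∈ Ioo (0:ℝ) 1)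
    (hx₀ : IntervalIntegrable (fun τ => x₀ (τ - 1)) volume 0 1)
    (hx₀tilde : IntervalIntegrable (fun τ => x₀tilde (τ - 1)) volume 0 1)
    (hu : IntervalIntegrable u volume 0 1)
    (hz : ∀ t ∈ Icc ε (1 + ε), traj a₁ y x₀ u t = 0)
    (hz' : ∀ t ∈ Icc ε (1 + ε), traj a₁ ytilde x₀tilde u t = 0) :
    EqOn (traj a₁ y x₀ u - traj a₁ ytilde x₀tilde u) 0 (Icc 0 1) := by
  have hcont := (continuousOn_traj (a₁ := a₁) (y := y) hx₀ hu).sub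
    (continuousOn_traj (a₁ := a₁) (y := ytilde) hx₀tilde hu)
  have hεIcc : Icc 0 ε ⊆ Icc (0:ℝ) 1 := Icc_subset_Icc_right hε.2.le
  have hprim : ∀ r ∈ Icc 0 ε, ∫ s in 0..r, (traj a₁ y x₀ u - traj a₁ ytilde x₀tilde u) s = 0 := by
    intro r hr
    have hint {y : ℝ} {x₀ : ℝ → ℝ} (h : IntervalIntegrable (fun τ => x₀ (τ - 1)) volume 0 1) :
        IntervalIntegrable (traj a₁ y x₀ u) volume 0 r :=
      ((continuousOn_traj h hu).mono
        ((Icc_subset_Icc_right hr.2).trans hεIcc)).intervalIntegrable_of_Icc hr.1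
    rw [Pi.sub_def, intervalIntegral.integral_sub (hint hx₀) (hint hx₀tilde),
      integral_traj_eq_of_forall_traj_eq_zero ha₁ hε.2.le hz hr (hint hx₀),
      integral_traj_eq_of_forall_traj_eq_zero ha₁ hε.2.le hz' hr (hint hx₀tilde), sub_self]
  have hinit := eqOn_zero_of_forall_intervalIntegral_eq_zero hε.1 (hcont.mono hεIcc) hprim
  intro t ht
  rcases le_total t ε with htε | htε
  · exact hinit ⟨ht.1, htε⟩
  · have ht' : t ∈ Icc ε (1 + ε) := ⟨htε, by linarith [ht.2, hε.1]⟩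
    simp [hz t ht', hz' t ht']

theorem eq_zero_of_xtilde_eqOn_zero (ha₁ : a₁ ≠ 0) (hx₀ : IntervalIntegrable x₀ volume (-1) 0)
    (h : EqOn (xtilde a₁ y x₀) 0 (Icc 0 1)) :
    y = 0 ∧ x₀ =ᵐ[volume.restrict (Ioo (-1) 0)] 0 := by
  have hy : y = 0 := by simpa [xtilde] using h (left_mem_Icc.2 zero_le_one)
  refine ⟨hy, ae_eq_zero_of_forall_intervalIntegral_eq_zero hx₀ fun x hx => ?_⟩
  have hx1 := h (⟨by linarith [hx.1], by linarith [hx.2]⟩ : x + 1 ∈ Icc (0:ℝ) 1)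
  simpa [xtilde, hy, ha₁, intervalIntegral.integral_comp_sub_right] using hx1

end Trajectory

/-- for `a₁ ≠ 0`, different initial states (as elements of
`ℝ × L²(-1,0)`) have disjoint sets of admissible controls. -/
theorem admissibleSet_disjoint
    (a₁ ε : ℝ) (ha₁ : a₁ ≠ 0) (hε : ε ∈ Set.Ioo (0:ℝ) 1)
    (y ytilde : ℝ) (x₀ x₀tilde : ℝ → ℝ)
    (hx₀ : MemLp x₀ 2 (volume.restrict (Set.Ioo (-1:ℝ) 0)))
    (hx₀tilde : MemLp x₀tilde 2 (volume.restrict (Set.Ioo (-1:ℝ) 0)))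
    (hne : y ≠ ytilde ∨ ¬ (x₀ =ᶠ[ae (volume.restrict (Set.Ioo (-1:ℝ) 0))] x₀tilde)) :
    admissibleSet a₁ ε y x₀ ∩ admissibleSet a₁ ε ytilde x₀tilde = ∅ := by
  have hshift {f : ℝ → ℝ} (hf : IntervalIntegrable f volume (-1) 0) :
      IntervalIntegrable (fun τ => f (τ - 1)) volume 0 1 := by
    simpa using hf.comp_sub_right 1
  have hx₀i := hx₀.intervalIntegrable_of_Ioo one_le_two (by norm_num)
  have hx₀tildei := hx₀tilde.intervalIntegrable_of_Ioo one_le_two (by norm_num)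
  refine eq_empty_iff_forall_notMem.2 fun u ⟨⟨hu, hz⟩, _, hz'⟩ => ?_
  have hu1 : IntervalIntegrable u volume 0 1 := by
    refine (hu.intervalIntegrable_of_Ioo one_le_two (by linarith [hε.1])).mono_set ?_
    rw [uIcc_of_le zero_le_one, uIcc_of_le (by linarith [hε.1])]
    exact Icc_subset_Icc_right (by linarith [hε.1])
  have hD := traj_sub_traj_eqOn_zero ha₁ hε (hshift hx₀i) (hshift hx₀tildei) hu1 hz hz'
  obtain ⟨hy, hx⟩ := eq_zero_of_xtilde_eqOn_zero (x₀ := x₀ - x₀tilde) ha₁ (hx₀i.sub hx₀tildei)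
    fun t ht => by
      rw [← traj_sub_traj_of_mem_Icc (u := u) (hshift hx₀i) (hshift hx₀tildei) ht]
      exact hD ht
  rcases hne with h | h
  · exact h (sub_eq_zero.1 hy)
  · exact h (hx.mono fun _ h => sub_eq_zero.1 h)
end

section
/- Let N ≥ 1, d₁,…,d_N ∈ ℝ, a₀,a₁,…,a_N ∈ ℝ, ε > 0 and φ₁,…,φ_N ∈ L²(0,ε). Then the functional Φ is Fréchet differentiable at every u₀ ∈ L²(0,ε), with derivative h ↦ 2⟨G[u₀], h⟩_{L²(0,ε)}, where G[u₀](t) = (1 + Σ_{k=1}^N d_k²)·u₀(t) + Σ_{k=1}^N d_k(d_k a₀ − a_k)∫₀ᵗ e^{a₀(t−τ)} u₀(τ)dτ + Σ_{k=1}^N d_k φ_k(t) + Σ_{k=1}^N d_k(d_k a₀ − a_k)∫ₜ^ε e^{−a₀(t−τ)} u₀(τ)dτ + Σ_{k=1}^N (d_k a₀ − a_k)∫ₜ^ε e^{−a₀(t−τ)} φ_k(τ)dτ + Σ_{k=1}^N (d_k a₀ − a_k)² ∫ₜ^ε e^{−a₀(t−τ)} ∫₀^τ e^{a₀(τ−s)}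 u₀(s)ds dτ. -/
/-!
Let `V` be the Volterra operator `(V f)(t) = ∫₀ᵗ e^{a₀(t-τ)} f(τ) dτ` on `L²(0,ε)` and
`A_s = d_s I + (d_s a₀ - a_s) V`. Then `Φ(u) = ‖u‖² + ∑_s ‖φ_s + A_s u‖²` is a sum of squared norms
of affine maps, so its derivative at `u` is `h ↦ 2⟪u + ∑_s A_s*(φ_s + A_s u), h⟫`.
The operator `V` has a kernel that is bounded on `(0,ε)²`, hence it is bounded on `L²`, and by
Fubini its adjoint is the integral operator with the transposed kernel,
`(V* g)(t) = ∫ₜ^ε e^{-a₀(t-τ)} g(τ) dτ`. Expanding `A_s*(φ_s + A_s u)` gives `G[u]`.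
-/

open MeasureTheory Set Function Filter
open scoped RealInnerProductSpace ENNReal

noncomputable section

namespace MeasureTheory

variable {α : Type*} [MeasurableSpace α] {μ : Measure α}

theorem Lp.coeFn_finset_sum {E ι : Type*} [NormedAddCommGroup E] {p : ℝ≥0∞} (s : Finset ι)
    (f : ι → Lp E p μ) :
    ⇑(∑ i ∈ s, f i) =ᵐ[μ] ∑ i ∈ s, ⇑(f i) := by
  classical
  induction s using Finset.induction_on with
  | empty => simpa using Lp.coeFn_zero E p μ
  | insert i s hi ih =>
    rw [Finset.sum_insert hi, Finset.sum_insert hi]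
    exact (Lp.coeFn_add _ _).trans (EventuallyEq.rfl.add ih)

theorem Lp.coeFn_smul_add_smul {p : ℝ≥0∞} {x y : Lp ℝ p μ} {F G : α → ℝ} (hx : ⇑x =ᵐ[μ] F)
    (hy : ⇑y =ᵐ[μ] G) (b c : ℝ) :
    ⇑(b • x + c • y) =ᵐ[μ] fun t => b * F t + c * G t := by
  filter_upwards [Lp.coeFn_add (b • x) (c • y), Lp.coeFn_smul b x, Lp.coeFn_smul c y, hx, hy]
    with t h1 h2 h3 h4 h5
  rw [h1, Pi.add_apply, h2, h3, Pi.smul_apply, Pi.smul_apply, h4, h5, smul_eq_mul, smul_eq_mul]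

theorem L2.integral_mul_eq_inner {x y : Lp ℝ 2 μ} {F G : α → ℝ} (hF : ⇑x =ᵐ[μ] F)
    (hG : ⇑y =ᵐ[μ] G) :
    ∫ t, F t * G t ∂μ = ⟪x, y⟫ := by
  rw [L2.inner_def]
  refine integral_congr_ae ?_
  filter_upwards [hF, hG] with t hFt hGt
  simp [hFt, hGt, mul_comm]

theorem L2.integrable [IsFiniteMeasure μ] (f : Lp ℝ 2 μ) : Integrable f μ :=
  (Lp.memLp f).integrable one_le_two

theorem L2.integral_norm_le_sqrt_measureReal_mul_norm [IsFiniteMeasure μ] (f : Lp ℝ 2 μ) :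
    ∫ t, ‖f t‖ ∂μ ≤ √(μ.real univ) * ‖f‖ := by
  have h := eLpNorm_le_eLpNorm_mul_rpow_measure_univ (p := 1) (q := 2) one_le_two
    (Lp.aestronglyMeasurable f)
  rw [integral_norm_eq_lintegral_enorm (Lp.aestronglyMeasurable f),
    ← eLpNorm_one_eq_lintegral_enorm, Lp.norm_def, Real.sqrt_eq_rpow, measureReal_def,
    ENNReal.toReal_rpow, ← ENNReal.toReal_mul, mul_comm]
  refine ENNReal.toReal_mono (by finiteness) (h.trans_eq ?_)
  norm_num

variable {K : α → α → ℝ} {C : ℝ} {f g : α → ℝ}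

def integralOperator (μ : Measure α) (K : α → α → ℝ) (f : α → ℝ) (t : α) : ℝ :=
  ∫ τ, K t τ * f τ ∂μ

theorem integralOperator_congr_ae (h : f =ᵐ[μ] g) :
    integralOperator μ K f = integralOperator μ K g :=
  funext fun t => integral_congr_ae (h.mono fun τ hτ => by simp only [hτ])

theorem integralOperator_const_mul (c : ℝ) :
    integralOperator μ K (fun τ => c * f τ) = fun t => c * integralOperator μ K f t := by
  funext t
  rw [integralOperator, integralOperator, ← integral_const_mul]
  simp only [mul_left_comm]

theorem integrable_kernel_mul_prod [SFinite μ]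
    (hK : AEStronglyMeasurable (uncurry K) (μ.prod μ))
    (hKC : ∀ᵐ p ∂μ.prod μ, ‖uncurry K p‖ ≤ C) (hf : Integrable f μ) (hg : Integrable g μ) :
    Integrable (fun p : α × α => K p.1 p.2 * (g p.1 * f p.2)) (μ.prod μ) :=
  (hg.mul_prod hf).bdd_mul hK hKC

theorem ae_integrable_kernel_mul [IsFiniteMeasure μ]
    (hK : AEStronglyMeasurable (uncurry K) (μ.prod μ))
    (hKC : ∀ᵐ p ∂μ.prod μ, ‖uncurry K p‖ ≤ C) (hf : Integrable f μ) :
    ∀ᵐ t ∂μ, Integrable (fun τ => K t τ * f τ) μ := by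
  simpa using (integrable_kernel_mul_prod hK hKC hf (integrable_const 1)).prod_right_ae

theorem ae_norm_integralOperator_le [SFinite μ] (hKC : ∀ᵐ p ∂μ.prod μ, ‖uncurry K p‖ ≤ C)
    (hf : Integrable f μ) :
    ∀ᵐ t ∂μ, ‖integralOperator μ K f t‖ ≤ C * ∫ τ, ‖f τ‖ ∂μ := by
  filter_upwards [Measure.ae_ae_of_ae_prod hKC] with t ht
  rw [← integral_const_mul]
  refine norm_integral_le_of_norm_le (hf.norm.const_mul C) ?_
  filter_upwards [ht] with τ hτ
  rw [norm_mul]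
  exact mul_le_mul_of_nonneg_right hτ (norm_nonneg _)

theorem memLp_integralOperator [IsFiniteMeasure μ]
    (hK : AEStronglyMeasurable (uncurry K) (μ.prod μ))
    (hKC : ∀ᵐ p ∂μ.prod μ, ‖uncurry K p‖ ≤ C) (p : ℝ≥0∞) (hf : Integrable f μ) :
    MemLp (integralOperator μ K f) p μ :=
  .of_bound (hK.mul hf.aestronglyMeasurable.comp_snd).integral_prod_right' _
    (ae_norm_integralOperator_le hKC hf)

theorem integralOperator_add [IsFiniteMeasure μ]
    (hK : AEStronglyMeasurable (uncurry K) (μ.prod μ))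
    (hKC : ∀ᵐ p ∂μ.prod μ, ‖uncurry K p‖ ≤ C) (hf : Integrable f μ) (hg : Integrable g μ) :
    integralOperator μ K (f + g) =ᵐ[μ] integralOperator μ K f + integralOperator μ K g := by
  filter_upwards [ae_integrable_kernel_mul hK hKC hf, ae_integrable_kernel_mul hK hKC hg]
    with t hft hgt
  simp only [integralOperator, Pi.add_apply, mul_add]
  exact integral_add hft hgt

theorem integral_integralOperator_mul [SFinite μ]
    (hK : AEStronglyMeasurable (uncurry K) (μ.prod μ))
    (hKC : ∀ᵐ p ∂μ.prod μ, ‖uncurry K p‖ ≤ C) (hf : Integrable f μ) (hg : Integrable g μ) :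
    ∫ t, integralOperator μ K f t * g t ∂μ = ∫ τ, f τ * integralOperator μ (flip K) g τ ∂μ :=
  calc ∫ t, integralOperator μ K f t * g t ∂μ = ∫ t, ∫ τ, K t τ * (g t * f τ) ∂μ ∂μ := by
        refine integral_congr_ae (ae_of_all _ fun t => ?_)
        simp only [integralOperator]
        rw [← integral_mul_const]
        congr 1 with τ
        ring
    _ = ∫ τ, ∫ t, K t τ * (g t * f τ) ∂μ ∂μ :=
        integral_integral_swap (integrable_kernel_mul_prod hK hKC hf hg)
    _ = ∫ τ, f τ * integralOperator μ (flip K) g τ ∂μ := by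
        refine integral_congr_ae (ae_of_all _ fun τ => ?_)
        simp only [integralOperator]
        rw [← integral_const_mul]
        congr 1 with t
        simp only [flip]
        ring

theorem aestronglyMeasurable_uncurry_flip [SFinite μ]
    (hK : AEStronglyMeasurable (uncurry K) (μ.prod μ)) :
    AEStronglyMeasurable (uncurry (flip K)) (μ.prod μ) :=
  hK.comp_measurePreserving Measure.measurePreserving_swap

theorem ae_norm_uncurry_flip_le [SFinite μ] (hKC : ∀ᵐ p ∂μ.prod μ, ‖uncurry K p‖ ≤ C) :
    ∀ᵐ p ∂μ.prod μ, ‖uncurry (flip K) p‖ ≤ C :=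
  Measure.measurePreserving_swap.quasiMeasurePreserving.ae hKC

def integralOperatorL [IsFiniteMeasure μ]
    (hK : AEStronglyMeasurable (uncurry K) (μ.prod μ))
    (hKC : ∀ᵐ p ∂μ.prod μ, ‖uncurry K p‖ ≤ C) : Lp ℝ 2 μ →L[ℝ] Lp ℝ 2 μ :=
  LinearMap.mkContinuous
    { toFun := fun f =>
        (memLp_integralOperator hK hKC 2 (L2.integrable f)).toLp _
      map_add' := fun f g => by
        rw [← MemLp.toLp_add]
        refine MemLp.toLp_congr _ _ ?_
        rw [integralOperator_congr_ae (Lp.coeFn_add f g)]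
        exact integralOperator_add hK hKC (L2.integrable f)
          (L2.integrable g)
      map_smul' := fun c f => by
        rw [RingHom.id_apply, ← MemLp.toLp_const_smul]
        refine MemLp.toLp_congr _ _ ?_
        rw [integralOperator_congr_ae (Lp.coeFn_smul c f)]
        exact EventuallyEq.of_eq (integralOperator_const_mul c) }
    (measureUnivNNReal μ ^ (2 : ℝ≥0∞).toReal⁻¹ * (|C| * √(μ.real univ)))
    fun f => by
      have hf := L2.integrable f
      refine (Lp.norm_le_of_ae_bound (C := |C| * (√(μ.real univ) * ‖f‖)) (by positivity)
        ?_).trans_eq (by ring)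
      filter_upwards [(memLp_integralOperator hK hKC 2 hf).coeFn_toLp,
        ae_norm_integralOperator_le hKC hf] with t ht hbound
      simp only [LinearMap.coe_mk, AddHom.coe_mk, ht]
      calc _ ≤ C * ∫ τ, ‖f τ‖ ∂μ := hbound
        _ ≤ |C| * ∫ τ, ‖f τ‖ ∂μ :=
          mul_le_mul_of_nonneg_right (le_abs_self C) (integral_nonneg fun _ => norm_nonneg _)
        _ ≤ |C| * (√(μ.real univ) * ‖f‖) :=
          mul_le_mul_of_nonneg_left (L2.integral_norm_le_sqrt_measureReal_mul_norm f) (abs_nonneg C)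

theorem coeFn_integralOperatorL [IsFiniteMeasure μ]
    (hK : AEStronglyMeasurable (uncurry K) (μ.prod μ))
    (hKC : ∀ᵐ p ∂μ.prod μ, ‖uncurry K p‖ ≤ C) (f : Lp ℝ 2 μ) :
    ⇑(integralOperatorL hK hKC f) =ᵐ[μ] integralOperator μ K f :=
  (memLp_integralOperator hK hKC 2 (L2.integrable f)).coeFn_toLp

theorem adjoint_integralOperatorL [IsFiniteMeasure μ]
    (hK : AEStronglyMeasurable (uncurry K) (μ.prod μ))
    (hKC : ∀ᵐ p ∂μ.prod μ, ‖uncurry K p‖ ≤ C) :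
    (integralOperatorL hK hKC).adjoint =
      integralOperatorL (aestronglyMeasurable_uncurry_flip hK) (ae_norm_uncurry_flip_le hKC) := by
  refine ((ContinuousLinearMap.eq_adjoint_iff _ _).2 fun g f => ?_).symm
  rw [← L2.integral_mul_eq_inner (coeFn_integralOperatorL _ _ g) EventuallyEq.rfl,
    ← L2.integral_mul_eq_inner EventuallyEq.rfl (coeFn_integralOperatorL _ _ f)]
  simpa only [mul_comm] using (integral_integralOperator_mul hK hKC
    (L2.integrable f) (L2.integrable g)).symm

end MeasureTheory

section LeastSquares

variable {E F ι : Type*} [NormedAddCommGroup E] [InnerProductSpace ℝ E] [CompleteSpace E]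
  [NormedAddCommGroup F] [InnerProductSpace ℝ F] [CompleteSpace F]

theorem hasFDerivAt_norm_add_apply_sq (A : E →L[ℝ] F) (y : F) (x : E) :
    HasFDerivAt (fun x => ‖y + A x‖ ^ 2) (2 • innerSL ℝ (A.adjoint (y + A x))) x := by
  convert (A.hasFDerivAt.const_add y).norm_sq using 1
  ext h
  simp [ContinuousLinearMap.adjoint_inner_left]

theorem hasFDerivAt_norm_sq_add_sum_norm_add_apply_sq (s : Finset ι) (A : ι → E →L[ℝ] F)
    (y : ι → F) (x : E) :
    HasFDerivAt (fun x => ‖x‖ ^ 2 + ∑ i ∈ s, ‖y i + A i x‖ ^ 2)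
      (2 • innerSL ℝ (x + ∑ i ∈ s, (A i).adjoint (y i + A i x))) x := by
  refine ((hasStrictFDerivAt_norm_sq x).hasFDerivAt.fun_add (HasFDerivAt.fun_sum (u := s)
    fun i _ => hasFDerivAt_norm_add_apply_sq (A i) (y i) x)).congr_fderiv ?_
  ext h
  simp [mul_add, Finset.mul_sum]

end LeastSquares

section Volterra

open Real intervalIntegral

def volterraKernel (a t τ : ℝ) : ℝ := if τ ≤ t then exp (a * (t - τ)) else 0

def volterraIntegral (a : ℝ) (g : ℝ → ℝ) (t : ℝ) : ℝ := ∫ τ in 0..t, exp (a * (t - τ)) * g τ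

def adjointVolterraIntegral (a ε : ℝ) (g : ℝ → ℝ) (t : ℝ) : ℝ :=
  ∫ τ in t..ε, exp (-a * (t - τ)) * g τ

theorem measurable_uncurry_volterraKernel (a : ℝ) : Measurable (uncurry (volterraKernel a)) :=
  Measurable.ite (measurableSet_le measurable_snd measurable_fst) (by fun_prop) measurable_const

theorem ae_norm_volterraKernel_le (a ε : ℝ) :
    ∀ᵐ p ∂(volume.restrict (Ioo 0 ε)).prod (volume.restrict (Ioo 0 ε)),
      ‖uncurry (volterraKernel a) p‖ ≤ exp (|a| * ε) := by
  rw [Measure.prod_restrict]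
  filter_upwards [ae_restrict_mem (measurableSet_Ioo.prod measurableSet_Ioo)]
    with p ⟨⟨ht0, htε⟩, hτ0, hτε⟩
  simp only [uncurry, volterraKernel]
  split_ifs with hτt
  · rw [norm_of_nonneg (exp_pos _).le, exp_le_exp]
    calc a * (p.1 - p.2) ≤ |a| * |p.1 - p.2| := by rw [← abs_mul]; exact le_abs_self _
      _ ≤ |a| * ε := by gcongr; rw [abs_le]; constructor <;> linarith
  · simp [(exp_pos _).le]

variable {a ε : ℝ}

theorem integralOperator_volterraKernel {t : ℝ} (ht : t ∈ Ioo 0 ε) (g : ℝ → ℝ) :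
    integralOperator (volume.restrict (Ioo 0 ε)) (volterraKernel a) g t =
      volterraIntegral a g t := by
  have hset : Iic t ∩ Ioo 0 ε = Ioc 0 t := by
    ext τ; simp only [mem_inter_iff, mem_Iic, mem_Ioo, mem_Ioc]
    constructor
    · rintro ⟨h1, h2, -⟩; exact ⟨h2, h1⟩
    · rintro ⟨h1, h2⟩; exact ⟨h2, h1, h2.trans_lt ht.2⟩
  calc integralOperator (volume.restrict (Ioo 0 ε)) (volterraKernel a) g t
      = ∫ τ in Ioo 0 ε, (Iic t).indicator (fun τ => exp (a * (t - τ)) * g τ) τ := by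
        simp only [integralOperator, volterraKernel, indicator_apply, mem_Iic, ite_mul, zero_mul]
    _ = volterraIntegral a g t := by
        rw [MeasureTheory.integral_indicator measurableSet_Iic,
          Measure.restrict_restrict measurableSet_Iic, hset, volterraIntegral,
          integral_of_le ht.1.le]

theorem integralOperator_flip_volterraKernel {t : ℝ} (ht : t ∈ Ioo 0 ε) (g : ℝ → ℝ) :
    integralOperator (volume.restrict (Ioo 0 ε)) (flip (volterraKernel a)) g t =
      adjointVolterraIntegral a ε g t := by
  have hset : Ici t ∩ Ioo 0 ε = Ico t ε := by
    ext τ; simp only [mem_inter_iff, mem_Ici, mem_Ioo, mem_Ico]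
    constructor
    · rintro ⟨h1, -, h2⟩; exact ⟨h1, h2⟩
    · rintro ⟨h1, h2⟩; exact ⟨h1, ht.1.trans_le h1, h2⟩
  calc integralOperator (volume.restrict (Ioo 0 ε)) (flip (volterraKernel a)) g t
      = ∫ τ in Ioo 0 ε, (Ici t).indicator (fun τ => exp (-a * (t - τ)) * g τ) τ := by
        simp only [integralOperator, flip, volterraKernel, indicator_apply, mem_Ici, ite_mul,
          zero_mul, neg_mul, ← mul_neg, neg_sub]
    _ = adjointVolterraIntegral a ε g t := by
        rw [MeasureTheory.integral_indicator measurableSet_Ici,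
          Measure.restrict_restrict measurableSet_Ici, hset, integral_Ico_eq_integral_Ioc,
          adjointVolterraIntegral, integral_of_le ht.2.le]

def volterraOp (a ε : ℝ) :
    Lp ℝ 2 (volume.restrict (Ioo 0 ε)) →L[ℝ] Lp ℝ 2 (volume.restrict (Ioo 0 ε)) :=
  integralOperatorL (measurable_uncurry_volterraKernel a).aestronglyMeasurable
    (ae_norm_volterraKernel_le a ε)

theorem coeFn_volterraOp {x : Lp ℝ 2 (volume.restrict (Ioo 0 ε))} {g : ℝ → ℝ}
    (hx : ⇑x =ᵐ[volume.restrict (Ioo 0 ε)] g) :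
    ⇑(volterraOp a ε x) =ᵐ[volume.restrict (Ioo 0 ε)] volterraIntegral a g := by
  filter_upwards [coeFn_integralOperatorL _ _ x, ae_restrict_mem measurableSet_Ioo] with t h ht
  rw [volterraOp, h, integralOperator_congr_ae hx, integralOperator_volterraKernel ht]

theorem coeFn_adjoint_volterraOp {x : Lp ℝ 2 (volume.restrict (Ioo 0 ε))} {g : ℝ → ℝ}
    (hx : ⇑x =ᵐ[volume.restrict (Ioo 0 ε)] g) :
    ⇑((volterraOp a ε).adjoint x) =ᵐ[volume.restrict (Ioo 0 ε)] adjointVolterraIntegral a ε g := by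
  rw [volterraOp, adjoint_integralOperatorL]
  filter_upwards [coeFn_integralOperatorL _ _ x, ae_restrict_mem measurableSet_Ioo] with t h ht
  rw [h, integralOperator_congr_ae hx, integralOperator_flip_volterraKernel ht]

def smulAddSmulVolterraOp (d c a ε : ℝ) :
    Lp ℝ 2 (volume.restrict (Ioo 0 ε)) →L[ℝ] Lp ℝ 2 (volume.restrict (Ioo 0 ε)) :=
  d • ContinuousLinearMap.id ℝ _ + c • volterraOp a ε

theorem smulAddSmulVolterraOp_apply (d c : ℝ) (x : Lp ℝ 2 (volume.restrict (Ioo 0 ε))) :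
    smulAddSmulVolterraOp d c a ε x = d • x + c • volterraOp a ε x :=
  rfl

theorem adjoint_smulAddSmulVolterraOp_apply (d c : ℝ) (x : Lp ℝ 2 (volume.restrict (Ioo 0 ε))) :
    (smulAddSmulVolterraOp d c a ε).adjoint x = d • x + c • (volterraOp a ε).adjoint x := by
  simp [smulAddSmulVolterraOp, ContinuousLinearMap.adjoint_id]

theorem coeFn_add_smulAddSmulVolterraOp_apply {ψ : Lp ℝ 2 (volume.restrict (Ioo 0 ε))}
    {φ : ℝ → ℝ} (hψ : ⇑ψ =ᵐ[volume.restrict (Ioo 0 ε)] φ) (d c : ℝ)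
    (f : Lp ℝ 2 (volume.restrict (Ioo 0 ε))) :
    ⇑(ψ + smulAddSmulVolterraOp d c a ε f)
      =ᵐ[volume.restrict (Ioo 0 ε)] fun t => φ t + d * f t + c * volterraIntegral a f t := by
  filter_upwards [Lp.coeFn_add ψ _, hψ,
    Lp.coeFn_smul_add_smul EventuallyEq.rfl (coeFn_volterraOp EventuallyEq.rfl) d c]
    with t h1 h2 h3
  rw [h1, Pi.add_apply, h2, smulAddSmulVolterraOp_apply, h3, add_assoc]

theorem coeFn_adjoint_smulAddSmulVolterraOp_apply {ψ : Lp ℝ 2 (volume.restrict (Ioo 0 ε))}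
    {φ : ℝ → ℝ} (hψ : ⇑ψ =ᵐ[volume.restrict (Ioo 0 ε)] φ) (d c : ℝ)
    (u : Lp ℝ 2 (volume.restrict (Ioo 0 ε))) :
    ⇑((smulAddSmulVolterraOp d c a ε).adjoint (ψ + smulAddSmulVolterraOp d c a ε u))
      =ᵐ[volume.restrict (Ioo 0 ε)] fun t =>
        d * (φ t + d * u t + c * volterraIntegral a u t) +
          c * (adjointVolterraIntegral a ε φ t + (d * adjointVolterraIntegral a ε u t +
            c * adjointVolterraIntegral a ε (volterraIntegral a u) t)) := by
  have hW : ⇑((volterraOp a ε).adjoint (ψ + smulAddSmulVolterraOp d c a ε u))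
      =ᵐ[volume.restrict (Ioo 0 ε)] fun t => adjointVolterraIntegral a ε φ t +
        (d * adjointVolterraIntegral a ε u t +
          c * adjointVolterraIntegral a ε (volterraIntegral a u) t) := by
    rw [smulAddSmulVolterraOp_apply, map_add, map_add, map_smul, map_smul]
    filter_upwards [Lp.coeFn_add ((volterraOp a ε).adjoint ψ) _, coeFn_adjoint_volterraOp hψ,
      Lp.coeFn_smul_add_smul (coeFn_adjoint_volterraOp EventuallyEq.rfl)
        (coeFn_adjoint_volterraOp (coeFn_volterraOp EventuallyEq.rfl)) d c]
      with t h1 h2 h3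
    rw [h1, Pi.add_apply, h2, h3]
  rw [adjoint_smulAddSmulVolterraOp_apply]
  exact Lp.coeFn_smul_add_smul (coeFn_add_smulAddSmulVolterraOp_apply hψ d c u) hW d c

theorem intervalIntegral_mul_eq_inner (hε : 0 ≤ ε) {x y : Lp ℝ 2 (volume.restrict (Ioo 0 ε))}
    {F G : ℝ → ℝ} (hF : ⇑x =ᵐ[volume.restrict (Ioo 0 ε)] F)
    (hG : ⇑y =ᵐ[volume.restrict (Ioo 0 ε)] G) :
    ∫ t in 0..ε, F t * G t = ⟪x, y⟫ := by
  rw [integral_of_le hε, integral_Ioc_eq_integral_Ioo, L2.integral_mul_eq_inner hF hG]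

theorem intervalIntegral_sq_eq_norm_sq (hε : 0 ≤ ε) {x : Lp ℝ 2 (volume.restrict (Ioo 0 ε))}
    {F : ℝ → ℝ} (hF : ⇑x =ᵐ[volume.restrict (Ioo 0 ε)] F) :
    ∫ t in 0..ε, F t ^ 2 = ‖x‖ ^ 2 := by
  simpa [sq, real_inner_self_eq_norm_sq] using intervalIntegral_mul_eq_inner hε hF hF

end Volterra

theorem neutral_energy_hasFDerivAt_general
    (N : ℕ) (d a : ℕ → ℝ) (ε : ℝ) (hε : 0 < ε)
    (φ : ℕ → ℝ → ℝ)
    (hφ : ∀ s ∈ Finset.Icc 1 N, MemLp (φ s) 2 (volume.restrict (Set.Ioo (0:ℝ) ε)))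
    (u₀ : Lp ℝ 2 (volume.restrict (Set.Ioo (0:ℝ) ε))) :
    let G : ℝ → ℝ := fun t =>
      (1 + ∑ k ∈ Finset.Icc 1 N, (d k) ^ 2) * u₀ t
      + (∑ k ∈ Finset.Icc 1 N, d k * (d k * a 0 - a k) *
          ∫ τ in (0:ℝ)..t, Real.exp (a 0 * (t - τ)) * u₀ τ)
      + (∑ k ∈ Finset.Icc 1 N, d k * φ k t)
      + (∑ k ∈ Finset.Icc 1 N, d k * (d k * a 0 - a k) *
          ∫ τ in t..ε, Real.exp (- a 0 * (t - τ)) * u₀ τ)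
      + (∑ k ∈ Finset.Icc 1 N, (d k * a 0 - a k) *
          ∫ τ in t..ε, Real.exp (- a 0 * (t - τ)) * φ k τ)
      + (∑ k ∈ Finset.Icc 1 N, (d k * a 0 - a k) ^ 2 *
          ∫ τ in t..ε, Real.exp (- a 0 * (t - τ)) *
            ∫ s in (0:ℝ)..τ, Real.exp (a 0 * (τ - s)) * u₀ s)
    ∃ L : Lp ℝ 2 (volume.restrict (Set.Ioo (0:ℝ) ε)) →L[ℝ] ℝ,
      HasFDerivAt
        (fun f : Lp ℝ 2 (volume.restrict (Set.Ioo (0:ℝ) ε)) =>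
          (∫ t in (0:ℝ)..ε, (f t) ^ 2) +
            ∑ s ∈ Finset.Icc 1 N, ∫ t in (0:ℝ)..ε,
              (φ s t + d s * f t +
                (d s * a 0 - a s) * ∫ τ in (0:ℝ)..t, Real.exp (a 0 * (t - τ)) * f τ) ^ 2)
        L u₀ ∧
      ∀ h : Lp ℝ 2 (volume.restrict (Set.Ioo (0:ℝ) ε)),
        L h = 2 * ∫ t in (0:ℝ)..ε, G t * h t := by
  intro G
  choose! ψ hψ using fun s (hs : s ∈ Finset.Icc 1 N) =>
    (⟨_, (hφ s hs).coeFn_toLp⟩ : ∃ x : Lp ℝ 2 (volume.restrict (Ioo (0:ℝ) ε)),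
      ⇑x =ᵐ[volume.restrict (Ioo (0:ℝ) ε)] φ s)
  let A s := smulAddSmulVolterraOp (d s) (d s * a 0 - a s) (a 0) ε
  have hG : ⇑(u₀ + ∑ s ∈ Finset.Icc 1 N, (A s).adjoint (ψ s + A s u₀))
      =ᵐ[volume.restrict (Ioo 0 ε)] G := by
    filter_upwards [Lp.coeFn_add u₀ _,
      Lp.coeFn_finset_sum (Finset.Icc 1 N) fun s => (A s).adjoint (ψ s + A s u₀),
      (eventually_all_finset _).2 fun s hs =>
        coeFn_adjoint_smulAddSmulVolterraOp_apply (hψ s hs) (d s) (d s * a 0 - a s) u₀]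
      with t h1 h2 h3
    rw [h1, Pi.add_apply, h2, Finset.sum_apply, Finset.sum_congr rfl h3]
    simp only [G, add_mul, one_mul, Finset.sum_mul, add_assoc, ← Finset.sum_add_distrib]
    exact congrArg _ (Finset.sum_congr rfl fun s _ => by
      simp only [volterraIntegral, adjointVolterraIntegral]
      ring)
  refine ⟨2 • innerSL ℝ (u₀ + ∑ s ∈ Finset.Icc 1 N, (A s).adjoint (ψ s + A s u₀)), ?_, fun h => ?_⟩
  · refine (hasFDerivAt_norm_sq_add_sum_norm_add_apply_sq (Finset.Icc 1 N) A ψ u₀)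
      |>.congr_of_eventuallyEq (Eventually.of_forall fun f => ?_)
    dsimp only
    rw [intervalIntegral_sq_eq_norm_sq hε.le EventuallyEq.rfl]
    exact congrArg _ (Finset.sum_congr rfl fun s hs => intervalIntegral_sq_eq_norm_sq hε.le
      (coeFn_add_smulAddSmulVolterraOp_apply (hψ s hs) _ _ f))
  · rw [FunLike.coe_smul, Pi.smul_apply, innerSL_apply_apply, nsmul_eq_mul,
      Nat.cast_ofNat, intervalIntegral_mul_eq_inner hε.le hG EventuallyEq.rfl]

/-- the neutral energy functional `Φ` on `L²(0,ε)` is Fréchet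
differentiable at every `u₀`, with derivative `h ↦ 2⟨G[u₀], h⟩`. -/
theorem neutral_energy_hasFDerivAt
    (N : ℕ) (hN : 1 ≤ N) (d a : ℕ → ℝ) (ε : ℝ) (hε : 0 < ε)
    (φ : ℕ → ℝ → ℝ)
    (hφ : ∀ s ∈ Finset.Icc 1 N, MemLp (φ s) 2 (volume.restrict (Set.Ioo (0:ℝ) ε)))
    (u₀ : Lp ℝ 2 (volume.restrict (Set.Ioo (0:ℝ) ε))) :
    let G : ℝ → ℝ := fun t =>
      (1 + ∑ k ∈ Finset.Icc 1 N, (d k) ^ 2) * u₀ t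
      + (∑ k ∈ Finset.Icc 1 N, d k * (d k * a 0 - a k) *
          ∫ τ in (0:ℝ)..t, Real.exp (a 0 * (t - τ)) * u₀ τ)
      + (∑ k ∈ Finset.Icc 1 N, d k * φ k t)
      + (∑ k ∈ Finset.Icc 1 N, d k * (d k * a 0 - a k) *
          ∫ τ in t..ε, Real.exp (- a 0 * (t - τ)) * u₀ τ)
      + (∑ k ∈ Finset.Icc 1 N, (d k * a 0 - a k) *
          ∫ τ in t..ε, Real.exp (- a 0 * (t - τ)) * φ k τ)
      + (∑ k ∈ Finset.Icc 1 N, (d k * a 0 - a k) ^ 2 *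
          ∫ τ in t..ε, Real.exp (- a 0 * (t - τ)) *
            ∫ s in (0:ℝ)..τ, Real.exp (a 0 * (τ - s)) * u₀ s)
    ∃ L : Lp ℝ 2 (volume.restrict (Set.Ioo (0:ℝ) ε)) →L[ℝ] ℝ,
      HasFDerivAt
        (fun f : Lp ℝ 2 (volume.restrict (Set.Ioo (0:ℝ) ε)) =>
          (∫ t in (0:ℝ)..ε, (f t) ^ 2) +
            ∑ s ∈ Finset.Icc 1 N, ∫ t in (0:ℝ)..ε,
              (φ s t + d s * f t +
                (d s * a 0 - a s) * ∫ τ in (0:ℝ)..t, Real.exp (a 0 * (t - τ)) * f τ) ^ 2)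
        L u₀ ∧
      ∀ h : Lp ℝ 2 (volume.restrict (Set.Ioo (0:ℝ) ε)),
        L h = 2 * ∫ t in (0:ℝ)..ε, G t * h t :=
  neutral_energy_hasFDerivAt_general N d a ε hε φ hφ u₀
end
end
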